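/- Consider the common-emitter amplifier inclusion: find (i, v) ∈ ℝ² × ℝ² with 0 ∈ R̃(i) + v and 0 ∈ G̃(v) − i, where R̃(i₁,i₂) := (R_C(i₁) + s₁, R_E(i₂) + s₂) for outer semicontinuous set-valued operators R_C, R_E : ℝ ⇒ ℝ and a fixed source vector s = (s₁,s₂) ∈ ℝ², and G̃ := T_NPN + (1/r)·id for the Ebers–Moll operator T_NPN built from α_R, α_F ∈ [0,1) and a monotone, outer semicontinuous T_D : ℝ ⇒ ℝ, with leakage resistance r > 0. Suppose R_C and R_E are (9r/8, −1/(8r))-semimonotone, and let the stepsizes satisfy γ ∈ (γ̲, γ̄) with γ̲ := (5 − √10)/(9r) and γ̄ := (5 + √10)/(9r), τ ∈ (1/γ̄, 1/γ), and λ ∈ (0, 2(1 − 1/(6rγ) − 9r/(10τ))). Then any sequence (i^k, v^k)_{k∈ℕ} generated by the Chambolle–Pock iteration ī^k ∈ J_{γR̃}(i^k − γ v^k), v̄^k ∈ J_{τG̃}(v^k + τ(2ī^k − i^k)), i^{k+1} = i^k + λ(ī^k − i^k), v^{k+1} = v^k + λ(v̄^k − v^k) converges to a solution (i*, v*) of the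 inclusion. -/

import Mathlib

/-- The Ebers–Moll matrix with rows `(1, -αR)` and `(-αF, 1)`, applied to a vector of
`ℝ²` (with the Euclidean inner product and norm). -/
noncomputable def applyEM (aR aF : ℝ) (w : EuclideanSpace ℝ (Fin 2)) :
    EuclideanSpace ℝ (Fin 2) :=
  (WithLp.equiv 2 (Fin 2 → ℝ)).symm
    ((Matrix.of ![![1, -aR], ![-aF, 1]]).mulVec (WithLp.equiv 2 (Fin 2 → ℝ) w))

/-- A set-valued operator `T_D : ℝ ⇒ ℝ` is monotone if `(u - v)(x - y) ≥ 0` whenever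
`u ∈ T_D(x)` and `v ∈ T_D(y)`. -/
def MonotoneSetValued (TD : ℝ → Set ℝ) : Prop :=
  ∀ ⦃x u y v : ℝ⦄, u ∈ TD x → v ∈ TD y → (u - v) * (x - y) ≥ 0

/-- The Ebers–Moll transistor operator `T_NPN : ℝ² ⇒ ℝ²` built from the diode law `T_D`. -/
noncomputable def TNPN (aR aF : ℝ) (TD : ℝ → Set ℝ) (v : EuclideanSpace ℝ (Fin 2)) :
    Set (EuclideanSpace ℝ (Fin 2)) :=
  {w | ∃ u₁ ∈ TD (v 0), ∃ u₂ ∈ TD (v 1),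
    w = applyEM aR aF ((WithLp.equiv 2 (Fin 2 → ℝ)).symm ![u₁, u₂])}

/-- `T_NPN + (1/r)·id`, the transistor with leakage resistance `r`. -/
noncomputable def TNPNr (aR aF : ℝ) (TD : ℝ → Set ℝ) (r : ℝ)
    (v : EuclideanSpace ℝ (Fin 2)) : Set (EuclideanSpace ℝ (Fin 2)) :=
  (fun w => w + (1 / r) • v) '' TNPN aR aF TD v

/-- A set-valued operator on `ℝ` is `(μ,ρ)`-semimonotone if
`(x − y)(u − v) ≥ μ(x − y)² + ρ(u − v)²` for all graph points `(x,u)`, `(y,v)`. -/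
def SemimonotoneReal (μ ρ : ℝ) (A : ℝ → Set ℝ) : Prop :=
  ∀ ⦃x u y v : ℝ⦄, u ∈ A x → v ∈ A y →
    (x - y) * (u - v) ≥ μ * (x - y) ^ 2 + ρ * (u - v) ^ 2

set_option maxHeartbeats 1000000



lemma aux (aR aF c0 c1 b0 b1 : ℝ) (h1 : 0 ≤ aR) (h2 : aR ≤ 1) (h3 : 0 ≤ aF) (h4 : aF ≤ 1)
    (hb0 : 0 < b0) (hc1 : 0 ≤ c1*b1) (hc0 : 0 ≤ c0) (hneg : (c0 - aR*c1)*b0 < 0) :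
    0 ≤ (c0-aR*c1)^2 + (c1-aF*c0)^2 + 4*((c0-aR*c1)*b0 + (c1-aF*c0)*b1) + 2*b0^2 + 2*b1^2 := by
  have hX : c0 - aR*c1 < 0 := by nlinarith
  have haRc1 : 0 < aR * c1 := by nlinarith
  have hc1pos : 0 < c1 := by
    by_contra h
    push_neg at h
    nlinarith [mul_nonneg h1 (neg_nonneg.2 h)]
  have hb1 : 0 ≤ b1 := by
    by_contra h
    push_neg at h
    nlinarith [mul_pos hc1pos (neg_pos.2 h)]
  have hY : c1 - aF*c0 ≥ aR*c1 - c0 := by nlinarith [mul_nonneg (sub_nonneg.2 h2) hc1pos.le, mul_nonneg (sub_nonneg.2 h4) hc0]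
  have hYpos : 0 < c1 - aF*c0 := lt_of_lt_of_le (by nlinarith) hY
  have hsq : (c1-aF*c0)^2 ≥ (c0-aR*c1)^2 := by nlinarith
  nlinarith [hsq, mul_nonneg hb1 hYpos.le, sq_nonneg (c0-aR*c1+b0), sq_nonneg b1]

lemma coordCase (aR aF c0 c1 b0 b1 : ℝ) (h1 : 0 ≤ aR) (h2 : aR ≤ 1) (h3 : 0 ≤ aF) (h4 : aF ≤ 1)
    (hc0 : 0 ≤ c0*b0) (hc1 : 0 ≤ c1*b1) (hneg : (c0 - aR*c1)*b0 < 0) :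
    0 ≤ (c0-aR*c1)^2 + (c1-aF*c0)^2 + 4*((c0-aR*c1)*b0 + (c1-aF*c0)*b1) + 2*b0^2 + 2*b1^2 := by
  rcases lt_trichotomy b0 0 with hb | hb | hb
  · have := aux aR aF (-c0) (-c1) (-b0) (-b1) h1 h2 h3 h4 (by linarith) (by nlinarith) (by nlinarith) (by nlinarith)
    nlinarith [this]
  · rw [hb] at hneg; simp at hneg
  · exact aux aR aF c0 c1 b0 b1 h1 h2 h3 h4 hb hc1 (by nlinarith) hneg

lemma Ekey (aR aF c0 c1 b0 b1 : ℝ) (h1 : 0 ≤ aR) (h2 : aR ≤ 1) (h3 : 0 ≤ aF) (h4 : aF ≤ 1)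
    (hc0 : 0 ≤ c0*b0) (hc1 : 0 ≤ c1*b1) :
    0 ≤ (c0-aR*c1)^2 + (c1-aF*c0)^2 + 4*((c0-aR*c1)*b0 + (c1-aF*c0)*b1) + 2*b0^2 + 2*b1^2 := by
  rcases lt_or_ge ((c0 - aR*c1)*b0) 0 with hA | hA
  · exact coordCase aR aF c0 c1 b0 b1 h1 h2 h3 h4 hc0 hc1 hA
  rcases lt_or_ge ((c1 - aF*c0)*b1) 0 with hB | hB
  · have := coordCase aF aR c1 c0 b1 b0 h3 h4 h1 h2 hc1 hc0 hB
    nlinarith [this]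
  · nlinarith [sq_nonneg (c0-aR*c1), sq_nonneg (c1-aF*c0), sq_nonneg b0, sq_nonneg b1]





def Nf (gi ti x0 x1 y0 y1 : ℝ) : ℝ :=
  gi*(x0^2+x1^2) - 2*(x0*y0+x1*y1) + ti*(y0^2+y1^2)

lemma Nf_nonneg (gi ti x0 x1 y0 y1 : ℝ) (hgi : 0 < gi) (hgiti : 1 ≤ gi*ti) :
    0 ≤ Nf gi ti x0 x1 y0 y1 := by
  unfold Nf
  nlinarith [sq_nonneg (gi*x0 - y0), sq_nonneg (gi*x1 - y1), sq_nonneg y0, sq_nonneg y1,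
    mul_nonneg (sub_nonneg.2 hgiti) (add_nonneg (sq_nonneg y0) (sq_nonneg y1))]

lemma young (e ei u b : ℝ) (he : 0 < e) (hei : e*ei = 1) :
    (u-b)^2 ≤ (1+e)*u^2 + (1+ei)*b^2 := by
  nlinarith [sq_nonneg (e*u+b), sq_nonneg u, sq_nonneg b]

lemma master (gi ti r ri lam δ ε εi ε2 ε2i cx cy K θ : ℝ)
    (hgi : 0 < gi) (hti : 0 < ti) (hr : 0 < r) (hrri : r*ri = 1)
    (hgiti : 1 ≤ gi*ti)
    (hlam : 0 < lam) (hδ : 0 < δ)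
    (hεpos : 0 < ε) (hεεi : ε*εi = 1) (hε2pos : 0 < ε2) (hε2εi : ε2*ε2i = 1)
    (hcxpos : 0 ≤ cx) (hcypos : 0 ≤ cy)
    (hCE : (2-lam) - (ri/4)*(1+ε)*gi - r*(1+ε2)*ti = δ/3)
    (hCX : (9/4)*r - r*(1+ε2i) = cx)
    (hCY : ri - (ri/4)*(1+εi) = cy)
    (hKδ : 2 ≤ K*(δ/3)) (hKx : 2*(gi+1) ≤ K*cx) (hKy : 2*(ti+1) ≤ K*cy) (hKpos : 0 < K)
    (hθ : θ*K = lam)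
    (x0 x1 y0 y1 bx0 bx1 by0 by1 w0 w1 g0 g1 xp0 xp1 yp0 yp1 : ℝ)
    (hw0 : w0 = gi*(x0-bx0) - y0) (hw1 : w1 = gi*(x1-bx1) - y1)
    (hg0 : g0 = ti*(y0-by0) + 2*bx0 - x0) (hg1 : g1 = ti*(y1-by1) + 2*bx1 - x1)
    (hxp0 : xp0 = x0 + lam*(bx0-x0)) (hxp1 : xp1 = x1 + lam*(bx1-x1))
    (hyp0 : yp0 = y0 + lam*(by0-y0)) (hyp1 : yp1 = y1 + lam*(by1-y1))
    (HR0 : bx0*w0 ≥ (9/8)*r*bx0^2 - (ri/8)*w0^2)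
    (HR1 : bx1*w1 ≥ (9/8)*r*bx1^2 - (ri/8)*w1^2)
    (HG : by0*g0 + by1*g1 ≥ (ri/2)*(by0^2+by1^2) - (r/2)*(g0^2+g1^2)) :
    Nf gi ti xp0 xp1 yp0 yp1 ≤ (1-θ) * Nf gi ti x0 x1 y0 y1 := by
  have hri : 0 < ri := by
    have h1 : 0 < r*ri := by rw [hrri]; exact one_pos
    rcases mul_pos_iff.mp h1 with ⟨_, h⟩ | ⟨h, _⟩
    · exact h
    · linarith
  obtain ⟨EM, hEM⟩ : ∃ a, Nf gi ti (x0-bx0) (x1-bx1) (y0-by0) (y1-by1) = a := ⟨_, rfl⟩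
  obtain ⟨NN, hNN⟩ : ∃ a, Nf gi ti x0 x1 y0 y1 = a := ⟨_, rfl⟩
  obtain ⟨NP, hNP⟩ : ∃ a, Nf gi ti xp0 xp1 yp0 yp1 = a := ⟨_, rfl⟩
  rw [hNP, hNN]
  have hEMnn : 0 ≤ EM := hEM ▸ Nf_nonneg _ _ _ _ _ _ hgi hgiti
  obtain ⟨u0, hu0⟩ : ∃ a, gi*(x0-bx0) - (y0-by0) = a := ⟨_, rfl⟩
  obtain ⟨u1, hu1⟩ : ∃ a, gi*(x1-bx1) - (y1-by1) = a := ⟨_, rfl⟩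
  obtain ⟨t0, ht0⟩ : ∃ a, ti*(y0-by0) - (x0-bx0) = a := ⟨_, rfl⟩
  obtain ⟨t1, ht1⟩ : ∃ a, ti*(y1-by1) - (x1-bx1) = a := ⟨_, rfl⟩
  have I1 : NP = NN - lam*(2-lam)*EM
      - 2*lam*(bx0*w0 + bx1*w1 + by0*g0 + by1*g1) := by
    rw [← hNP, ← hNN, ← hEM, hw0, hw1, hg0, hg1, hxp0, hxp1, hyp0, hyp1]
    unfold Nf; ring
  have hsw : w0^2 + w1^2 ≤ (1+ε)*(u0^2+u1^2) + (1+εi)*(by0^2+by1^2) := by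
    have e0 : w0 = u0 - by0 := by rw [← hu0, hw0]; ring
    have e1 : w1 = u1 - by1 := by rw [← hu1, hw1]; ring
    have y0' := young ε εi u0 by0 hεpos hεεi
    have y1' := young ε εi u1 by1 hεpos hεεi
    rw [e0, e1]; linarith
  have hsg : g0^2 + g1^2 ≤ (1+ε2)*(t0^2+t1^2) + (1+ε2i)*(bx0^2+bx1^2) := by
    have e0 : g0 = t0 - (-bx0) := by rw [← ht0, hg0]; ring
    have e1 : g1 = t1 - (-bx1) := by rw [← ht1, hg1]; ring
    have y0' := young ε2 ε2i t0 (-bx0) hε2pos hε2εi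
    have y1' := young ε2 ε2i t1 (-bx1) hε2pos hε2εi
    rw [e0, e1]; linarith [y0', y1']
  have hSu : u0^2 + u1^2 ≤ gi*EM := by
    have hid : gi*EM - (u0^2+u1^2) = (gi*ti - 1)*((y0-by0)^2 + (y1-by1)^2) := by
      rw [← hEM, ← hu0, ← hu1]; unfold Nf; ring
    linarith [mul_nonneg (sub_nonneg.2 hgiti)
      (add_nonneg (sq_nonneg (y0-by0)) (sq_nonneg (y1-by1)))]
  have hSt : t0^2 + t1^2 ≤ ti*EM := by
    have hid : ti*EM - (t0^2+t1^2) = (gi*ti - 1)*((x0-bx0)^2 + (x1-bx1)^2) := by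
      rw [← hEM, ← ht0, ← ht1]; unfold Nf; ring
    linarith [mul_nonneg (sub_nonneg.2 hgiti)
      (add_nonneg (sq_nonneg (x0-bx0)) (sq_nonneg (x1-bx1)))]
  have m1 : (ri/8)*(w0^2+w1^2) ≤ (ri/8)*((1+ε)*(u0^2+u1^2) + (1+εi)*(by0^2+by1^2)) :=
    mul_le_mul_of_nonneg_left hsw (by positivity)
  have m2 : (r/2)*(g0^2+g1^2) ≤ (r/2)*((1+ε2)*(t0^2+t1^2) + (1+ε2i)*(bx0^2+bx1^2)) :=
    mul_le_mul_of_nonneg_left hsg (by positivity)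
  have m3 : (ri/8)*((1+ε)*(u0^2+u1^2)) ≤ (ri/8)*((1+ε)*(gi*EM)) := by
    apply mul_le_mul_of_nonneg_left _ (by positivity)
    exact mul_le_mul_of_nonneg_left hSu (by positivity)
  have m4 : (r/2)*((1+ε2)*(t0^2+t1^2)) ≤ (r/2)*((1+ε2)*(ti*EM)) := by
    apply mul_le_mul_of_nonneg_left _ (by positivity)
    exact mul_le_mul_of_nonneg_left hSt (by positivity)
  have hCE' : ((2-lam) - (ri/4)*(1+ε)*gi - r*(1+ε2)*ti)*EM = (δ/3)*EM := by rw [hCE]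
  have hCX' : ((9/4)*r - r*(1+ε2i))*(bx0^2+bx1^2) = cx*(bx0^2+bx1^2) := by rw [hCX]
  have hCY' : (ri - (ri/4)*(1+εi))*(by0^2+by1^2) = cy*(by0^2+by1^2) := by rw [hCY]
  have T : (δ/3)*EM + cx*(bx0^2+bx1^2) + cy*(by0^2+by1^2)
      ≤ (2-lam)*EM + 2*(bx0*w0 + bx1*w1 + by0*g0 + by1*g1) := by
    linarith [HR0, HR1, HG, m1, m2, m3, m4, hCE', hCX', hCY']
  have hNbound : NN ≤ 2*EM + 2*(gi+1)*(bx0^2+bx1^2) + 2*(ti+1)*(by0^2+by1^2) := by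
    have hD : 0 ≤ Nf gi ti ((x0-bx0)-bx0) ((x1-bx1)-bx1) ((y0-by0)-by0) ((y1-by1)-by1) :=
      Nf_nonneg _ _ _ _ _ _ hgi hgiti
    have hid : 2*EM + 2*(gi+1)*(bx0^2+bx1^2) + 2*(ti+1)*(by0^2+by1^2) - NN
        = Nf gi ti ((x0-bx0)-bx0) ((x1-bx1)-bx1) ((y0-by0)-by0) ((y1-by1)-by1)
          + 2*((bx0+by0)^2 + (bx1+by1)^2) := by
      rw [← hEM, ← hNN]; unfold Nf; ring
    linarith [hD, sq_nonneg (bx0+by0), sq_nonneg (bx1+by1)]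
  have hSbxnn : (0:ℝ) ≤ bx0^2+bx1^2 := by positivity
  have hSbynn : (0:ℝ) ≤ by0^2+by1^2 := by positivity
  have p1 : 2*EM ≤ (K*(δ/3))*EM := mul_le_mul_of_nonneg_right hKδ hEMnn
  have p2 : (2*(gi+1))*(bx0^2+bx1^2) ≤ (K*cx)*(bx0^2+bx1^2) :=
    mul_le_mul_of_nonneg_right hKx hSbxnn
  have p3 : (2*(ti+1))*(by0^2+by1^2) ≤ (K*cy)*(by0^2+by1^2) :=
    mul_le_mul_of_nonneg_right hKy hSbynn
  have hBr : NN ≤ K*((δ/3)*EM + cx*(bx0^2+bx1^2) + cy*(by0^2+by1^2)) := by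
    have expand : K*((δ/3)*EM + cx*(bx0^2+bx1^2) + cy*(by0^2+by1^2))
        = (K*(δ/3))*EM + (K*cx)*(bx0^2+bx1^2) + (K*cy)*(by0^2+by1^2) := by ring
    linarith [hNbound, p1, p2, p3]
  have hθnn : 0 ≤ θ := by
    by_contra h
    push_neg at h
    have : θ*K < 0 := mul_neg_of_neg_of_pos h hKpos
    linarith
  have final : θ*NN ≤ lam*((δ/3)*EM + cx*(bx0^2+bx1^2) + cy*(by0^2+by1^2)) := by
    calc θ*NN ≤ θ*(K*((δ/3)*EM + cx*(bx0^2+bx1^2) + cy*(by0^2+by1^2))) :=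
          mul_le_mul_of_nonneg_left hBr hθnn
    _ = lam*((δ/3)*EM + cx*(bx0^2+bx1^2) + cy*(by0^2+by1^2)) := by rw [← hθ]; ring
  have hT2 : lam*((δ/3)*EM + cx*(bx0^2+bx1^2) + cy*(by0^2+by1^2))
      ≤ lam*((2-lam)*EM + 2*(bx0*w0 + bx1*w1 + by0*g0 + by1*g1)) :=
    mul_le_mul_of_nonneg_left T hlam.le
  linarith [I1, hT2, final]





lemma esymm_apply0 (a b : ℝ) : ((WithLp.equiv 2 (Fin 2 → ℝ)).symm ![a, b]) 0 = a := rfl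
lemma esymm_apply1 (a b : ℝ) : ((WithLp.equiv 2 (Fin 2 → ℝ)).symm ![a, b]) 1 = b := rfl

lemma applyEM_apply0 (aR aF : ℝ) (w : EuclideanSpace ℝ (Fin 2)) :
    applyEM aR aF w 0 = w 0 - aR * w 1 := by
  simp [applyEM, Matrix.mulVec, dotProduct, Fin.sum_univ_two, Matrix.vecHead,
    Matrix.vecTail]
  ring

lemma applyEM_apply1 (aR aF : ℝ) (w : EuclideanSpace ℝ (Fin 2)) :
    applyEM aR aF w 1 = -(aF * w 0) + w 1 := by
  simp [applyEM, Matrix.mulVec, dotProduct, Fin.sum_univ_two, Matrix.vecHead,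
    Matrix.vecTail]

lemma sqrt_pow_nat (a : ℝ) (ha : 0 ≤ a) (n : ℕ) :
    Real.sqrt (a^n) = (Real.sqrt a)^n := by
  induction n with
  | zero => simp
  | succ n ih => rw [pow_succ, pow_succ, Real.sqrt_mul (by positivity), ih]

lemma Gsemi (aR aF r ri a0 a1 b0 b1 g0 g1 : ℝ) (h1 : 0 ≤ aR) (h2 : aR ≤ 1)
    (h3 : 0 ≤ aF) (h4 : aF ≤ 1) (hr : 0 < r) (hrri : r*ri = 1)
    (hab0 : 0 ≤ a0*b0) (hab1 : 0 ≤ a1*b1)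
    (hg0 : r*g0 = r*a0 - aR*(r*a1) + b0) (hg1 : r*g1 = -(aF*(r*a0)) + r*a1 + b1)
    (hEkey : 0 ≤ (r*a0-aR*(r*a1))^2 + (r*a1-aF*(r*a0))^2
      + 4*((r*a0-aR*(r*a1))*b0 + (r*a1-aF*(r*a0))*b1) + 2*b0^2 + 2*b1^2) :
    b0*g0 + b1*g1 ≥ (ri/2)*(b0^2+b1^2) - (r/2)*(g0^2+g1^2) := by
  have hri : 0 < ri := by
    have h1' : 0 < r*ri := by rw [hrri]; exact one_pos
    rcases mul_pos_iff.mp h1' with ⟨_, h⟩ | ⟨h, _⟩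
    · exact h
    · linarith
  have q0 : (r*g0)^2 = (r*a0 - aR*(r*a1) + b0)^2 := by rw [hg0]
  have q1 : (r*g1)^2 = (-(aF*(r*a0)) + r*a1 + b1)^2 := by rw [hg1]
  have p0 : b0*(r*g0) = b0*(r*a0 - aR*(r*a1) + b0) := by rw [hg0]
  have p1 : b1*(r*g1) = b1*(-(aF*(r*a0)) + r*a1 + b1) := by rw [hg1]
  have key : 0 ≤ 2*(b0*(r*g0) + b1*(r*g1)) + ((r*g0)^2 + (r*g1)^2) - (b0^2+b1^2) := by
    rw [q0, q1, p0, p1]; nlinarith [hEkey]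
  have key2 : 0 ≤ (ri/2) * (2*(b0*(r*g0) + b1*(r*g1)) + ((r*g0)^2 + (r*g1)^2) - (b0^2+b1^2)) :=
    mul_nonneg (by positivity) key
  have expand : (ri/2) * (2*(b0*(r*g0) + b1*(r*g1)) + ((r*g0)^2 + (r*g1)^2) - (b0^2+b1^2))
      = (r*ri)*(b0*g0 + b1*g1) + (r*ri)*((r/2)*(g0^2+g1^2)) - (ri/2)*(b0^2+b1^2) := by
    ring
  rw [expand, hrri] at key2
  linarith



lemma Nf_lower (gi ti : ℝ) (hgi : 0 < gi) (hti : 0 < ti) (hgiti : 1 < gi*ti) :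
    ∃ ν > 0, ∀ a0 a1 b0 b1 : ℝ, ν*(a0^2+a1^2+b0^2+b1^2)
      ≤ gi*(a0^2+a1^2) - 2*(a0*b0+a1*b1) + ti*(b0^2+b1^2) := by
  set s := (1/ti + gi)/2 with hs
  have hspos : 0 < s := by positivity
  have h1 : 1/ti < gi := by
    rw [div_lt_iff₀ hti]; linarith [mul_comm gi ti]
  have hsgi : s < gi := by rw [hs]; linarith
  have hsti : 1/s < ti := by
    rw [div_lt_iff₀ hspos]
    have : 1/ti < s := by rw [hs]; linarith
    calc (1:ℝ) = ti * (1/ti) := by field_simp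
    _ < ti * s := by exact mul_lt_mul_of_pos_left this hti
  refine ⟨min (gi - s) (ti - 1/s), lt_min (by linarith) (by linarith), fun a0 a1 b0 b1 => ?_⟩
  have c0 : 0 ≤ s*a0^2 - 2*a0*b0 + (1/s)*b0^2 := by
    have := sq_nonneg (s*a0 - b0)
    have h2 : (s*a0-b0)^2/s = s*a0^2 - 2*a0*b0 + (1/s)*b0^2 := by field_simp; ring
    rw [← h2]; positivity
  have c1 : 0 ≤ s*a1^2 - 2*a1*b1 + (1/s)*b1^2 := by
    have := sq_nonneg (s*a1 - b1)
    have h2 : (s*a1-b1)^2/s = s*a1^2 - 2*a1*b1 + (1/s)*b1^2 := by field_simp; ring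
    rw [← h2]; positivity
  have m1 : min (gi - s) (ti - 1/s) ≤ gi - s := min_le_left _ _
  have m2 : min (gi - s) (ti - 1/s) ≤ ti - 1/s := min_le_right _ _
  have n0 : min (gi - s) (ti - 1/s)*(a0^2+a1^2) ≤ (gi-s)*(a0^2+a1^2) :=
    mul_le_mul_of_nonneg_right m1 (by positivity)
  have n1 : min (gi - s) (ti - 1/s)*(b0^2+b1^2) ≤ (ti-1/s)*(b0^2+b1^2) :=
    mul_le_mul_of_nonneg_right m2 (by positivity)
  nlinarith [c0, c1, n0, n1]





lemma constants (r γ τ lam : ℝ) (hr : 0 < r) (hγpos : 0 < γ) (hτpos : 0 < τ)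
    (hγτ : γ*τ < 1) (hlam0 : 0 < lam) (hlamu : lam < 2*(1 - 1/(6*r*γ) - 9*r/(10*τ))) :
    ∃ δ ε εi ε2 ε2i cx cy K θ : ℝ,
      0 < δ ∧ 0 < ε ∧ ε*εi = 1 ∧ 0 < ε2 ∧ ε2*ε2i = 1 ∧ 0 ≤ cx ∧ 0 ≤ cy ∧
      ((2-lam) - ((1/r)/4)*(1+ε)*(1/γ) - r*(1+ε2)*(1/τ) = δ/3) ∧
      ((9/4)*r - r*(1+ε2i) = cx) ∧
      ((1/r) - ((1/r)/4)*(1+εi) = cy) ∧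
      (2 ≤ K*(δ/3)) ∧ (2*((1/γ)+1) ≤ K*cx) ∧ (2*((1/τ)+1) ≤ K*cy) ∧ (0 < K) ∧
      (θ*K = lam) ∧ 0 < θ ∧ θ ≤ 1 := by
  obtain ⟨δ, hδdef⟩ : ∃ a : ℝ, a = 2 - 1/(3*r*γ) - 9*r/(5*τ) - lam := ⟨_, rfl⟩
  have hδpos : 0 < δ := by
    have he : 2*(1 - 1/(6*r*γ) - 9*r/(10*τ)) = 2 - 1/(3*r*γ) - 9*r/(5*τ) := by
      field_simp; ring
    rw [he] at hlamu
    rw [hδdef]; linarith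
  obtain ⟨ε, hεdef⟩ : ∃ a : ℝ, a = 1/3 + (4*r*γ*δ)/3 := ⟨_, rfl⟩
  have hεpos : 0 < ε := by rw [hεdef]; positivity
  have hεgt : 1/3 < ε := by
    have h : 0 < (4*r*γ*δ)/3 := by positivity
    rw [hεdef]; linarith
  obtain ⟨ε2, hε2def⟩ : ∃ a : ℝ, a = 4/5 + (τ*δ)/(3*r) := ⟨_, rfl⟩
  have hε2pos : 0 < ε2 := by rw [hε2def]; positivity
  have hε2gt : 4/5 < ε2 := by
    have h : 0 < (τ*δ)/(3*r) := by positivity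
    rw [hε2def]; linarith
  obtain ⟨cx, hcxdef⟩ : ∃ a : ℝ, a = (9/4)*r - r*(1+1/ε2) := ⟨_, rfl⟩
  obtain ⟨cy, hcydef⟩ : ∃ a : ℝ, a = (1/r) - ((1/r)/4)*(1+1/ε) := ⟨_, rfl⟩
  have hcxpos : 0 < cx := by
    have h1 : 1/ε2 < 5/4 := by
      rw [div_lt_iff₀ hε2pos]; linarith
    have h2 : r*(1+1/ε2) < r*(9/4) := by
      apply mul_lt_mul_of_pos_left (by linarith) hr
    rw [hcxdef]; linarith
  have hcypos : 0 < cy := by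
    have h1 : 1/ε < 3 := by
      rw [div_lt_iff₀ hεpos]; linarith
    have h2 : ((1/r)/4)*(1+1/ε) < ((1/r)/4)*4 := by
      apply mul_lt_mul_of_pos_left (by linarith) (by positivity)
    have h3 : ((1/r)/4)*4 = 1/r := by ring
    rw [hcydef]; linarith
  obtain ⟨K, hKdef⟩ : ∃ a : ℝ, a = 6/δ + 2*((1/γ)+1)/cx + 2*((1/τ)+1)/cy := ⟨_, rfl⟩
  have hKpos : 0 < K := by rw [hKdef]; positivity
  refine ⟨δ, ε, 1/ε, ε2, 1/ε2, cx, cy, K, lam/K,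
    hδpos, hεpos, mul_one_div_cancel (ne_of_gt hεpos), hε2pos,
    mul_one_div_cancel (ne_of_gt hε2pos), hcxpos.le, hcypos.le, ?_, hcxdef.symm,
    ?_, ?_, ?_, ?_,
    hKpos, div_mul_cancel₀ lam (ne_of_gt hKpos), by positivity, ?_⟩
  · -- hCE
    have c1 : ((1/r)/4)*(1+ε)*(1/γ) = 1/(3*r*γ) + δ/3 := by
      rw [hεdef]; field_simp; ring
    have c2 : r*(1+ε2)*(1/τ) = 9*r/(5*τ) + δ/3 := by
      rw [hε2def]; field_simp; ring
    rw [c1, c2, hδdef]; ring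
  · -- hCY form
    rw [hcydef]
  · -- hKδ
    have e1 : (6/δ)*(δ/3) = 2 := by field_simp; norm_num
    have e2 : 0 ≤ (2*((1/γ)+1)/cx)*(δ/3) := by positivity
    have e3 : 0 ≤ (2*((1/τ)+1)/cy)*(δ/3) := by positivity
    have e4 : K*(δ/3) = (6/δ)*(δ/3) + (2*((1/γ)+1)/cx)*(δ/3) + (2*((1/τ)+1)/cy)*(δ/3) := by
      rw [hKdef]; ring
    linarith
  · -- hKx
    have e1 : (2*((1/γ)+1)/cx)*cx = 2*((1/γ)+1) := div_mul_cancel₀ _ (ne_of_gt hcxpos)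
    have e2 : 0 ≤ (6/δ)*cx := by positivity
    have e3 : 0 ≤ (2*((1/τ)+1)/cy)*cx := by positivity
    have e4 : K*cx = (6/δ)*cx + (2*((1/γ)+1)/cx)*cx + (2*((1/τ)+1)/cy)*cx := by
      rw [hKdef]; ring
    linarith
  · -- hKy
    have e1 : (2*((1/τ)+1)/cy)*cy = 2*((1/τ)+1) := div_mul_cancel₀ _ (ne_of_gt hcypos)
    have e2 : 0 ≤ (6/δ)*cy := by positivity
    have e3 : 0 ≤ (2*((1/γ)+1)/cx)*cy := by positivity
    have e4 : K*cy = (6/δ)*cy + (2*((1/γ)+1)/cx)*cy + (2*((1/τ)+1)/cy)*cy := by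
      rw [hKdef]; ring
    linarith
  · -- θ ≤ 1
    have hδ2 : δ < 2 := by
      have h1 : 0 < 1/(3*r*γ) := by positivity
      have h2 : 0 < 9*r/(5*τ) := by positivity
      rw [hδdef]; linarith
    have hK3 : 3 ≤ 6/δ := by rw [le_div_iff₀ hδpos]; linarith
    have hlam2 : lam < 2 := by
      have h1 : 0 < 1/(6*r*γ) := by positivity
      have h2 : 0 < 9*r/(10*τ) := by positivity
      nlinarith
    have e2 : 0 ≤ 2*((1/γ)+1)/cx := by positivity
    have e3 : 0 ≤ 2*((1/τ)+1)/cy := by positivity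
    have : lam ≤ K := by rw [hKdef]; linarith
    rw [div_le_one hKpos]; exact this

theorem stmt_19 (aR aF : ℝ) (haR : aR ∈ Set.Ico (0 : ℝ) 1) (haF : aF ∈ Set.Ico (0 : ℝ) 1)
    (TD : ℝ → Set ℝ) (hTD : MonotoneSetValued TD)
    (hTDosc : IsClosed {p : ℝ × ℝ | p.2 ∈ TD p.1})
    (r : ℝ) (hr : r > 0)
    (RC RE : ℝ → Set ℝ)
    (hRCosc : IsClosed {p : ℝ × ℝ | p.2 ∈ RC p.1})
    (hREosc : IsClosed {p : ℝ × ℝ | p.2 ∈ RE p.1})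
    (hRCsemi : SemimonotoneReal (9 * r / 8) (-(1 / (8 * r))) RC)
    (hREsemi : SemimonotoneReal (9 * r / 8) (-(1 / (8 * r))) RE)
    (s : EuclideanSpace ℝ (Fin 2))
    -- `R̃(i₁,i₂) := (R_C(i₁) + s₁, R_E(i₂) + s₂)`
    (Rtil : EuclideanSpace ℝ (Fin 2) → Set (EuclideanSpace ℝ (Fin 2)))
    (hRtil : ∀ x, Rtil x = {w | ∃ a ∈ RC (x 0), ∃ b ∈ RE (x 1),
      w = (WithLp.equiv 2 (Fin 2 → ℝ)).symm ![a + s 0, b + s 1]})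
    -- `G̃ := T_NPN + (1/r)·id`
    (Gtil : EuclideanSpace ℝ (Fin 2) → Set (EuclideanSpace ℝ (Fin 2)))
    (hGtil : Gtil = TNPNr aR aF TD r)
    (γ τ lam : ℝ)
    (hγ : γ ∈ Set.Ioo ((5 - Real.sqrt 10) / (9 * r)) ((5 + Real.sqrt 10) / (9 * r)))
    (hτ : τ ∈ Set.Ioo (1 / ((5 + Real.sqrt 10) / (9 * r))) (1 / γ))
    (hlam : lam ∈ Set.Ioo 0 (2 * (1 - 1 / (6 * r * γ) - 9 * r / (10 * τ))))
    (i v ibar vbar : ℕ → EuclideanSpace ℝ (Fin 2))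
    -- `ī^k ∈ J_{γR̃}(i^k − γv^k)`
    (hstep1 : ∀ k : ℕ, ∃ w ∈ Rtil (ibar k), i k - γ • v k = ibar k + γ • w)
    -- `v̄^k ∈ J_{τG̃}(v^k + τ(2ī^k − i^k))`
    (hstep2 : ∀ k : ℕ, ∃ w ∈ Gtil (vbar k),
      v k + τ • (2 • ibar k - i k) = vbar k + τ • w)
    (hstep3 : ∀ k : ℕ, i (k + 1) = i k + lam • (ibar k - i k))
    (hstep4 : ∀ k : ℕ, v (k + 1) = v k + lam • (vbar k - v k)) :
    ∃ istar vstar : EuclideanSpace ℝ (Fin 2),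
      Filter.Tendsto (fun k => (i k, v k)) Filter.atTop (nhds (istar, vstar)) ∧
      (∃ w ∈ Rtil istar, w + vstar = 0) ∧ istar ∈ Gtil vstar := by
  classical
  obtain ⟨haR0, haR1⟩ := haR
  obtain ⟨haF0, haF1⟩ := haF
  obtain ⟨hγl, hγu⟩ := hγ
  obtain ⟨hτl, hτu⟩ := hτ
  obtain ⟨hlam0, hlamu⟩ := hlam
  have hsq10 : Real.sqrt 10 < 5 := by
    nlinarith [Real.sq_sqrt (show (0:ℝ) ≤ 10 by norm_num), Real.sqrt_nonneg 10]
  have hsq10nn : 0 ≤ Real.sqrt 10 := Real.sqrt_nonneg 10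
  have hγpos : 0 < γ := lt_trans (div_pos (by linarith) (by positivity)) hγl
  have hτpos : 0 < τ := lt_trans (by positivity) hτl
  have hγτ : γ*τ < 1 := by
    have h1 : τ*γ < (1/γ)*γ := mul_lt_mul_of_pos_right hτu hγpos
    have h2 : (1/γ)*γ = 1 := by field_simp
    nlinarith [h1, h2]
  obtain ⟨δ, ε, εi, ε2, ε2i, cx, cy, K, θ, hδpos, hεpos, hεεi, hε2pos, hε2εi, hcx, hcy,
    hCE, hCXe, hCYe, hKδ, hKx, hKy, hKpos, hθK, hθpos, hθle1⟩ :=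
    constants r γ τ lam hr hγpos hτpos hγτ hlam0 hlamu
  have hrri : r*(1/r) = 1 := mul_one_div_cancel (ne_of_gt hr)
  have hgipos : (0:ℝ) < 1/γ := by positivity
  have htipos : (0:ℝ) < 1/τ := by positivity
  have hgiti : 1 ≤ (1/γ)*(1/τ) := by
    rw [div_mul_div_comm, one_mul, le_div_iff₀ (by positivity)]
    linarith
  have hgiti' : 1 < (1/γ)*(1/τ) := by
    rw [div_mul_div_comm, one_mul, lt_div_iff₀ (by positivity)]
    linarith
  -- extract resolvent data
  choose W hWmem hWeq using hstep1
  choose G hGmem hGeq using hstep2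
  -- coordinate versions of step equations
  have hWcoord : ∀ (k : ℕ) (c : Fin 2), i k c - γ*(v k c) = ibar k c + γ*(W k c) := by
    intro k c
    have h := congrArg (fun z : EuclideanSpace ℝ (Fin 2) => z c) (hWeq k)
    simpa [PiLp.sub_apply, PiLp.add_apply, PiLp.smul_apply, smul_eq_mul] using h
  have hWf : ∀ (k : ℕ) (c : Fin 2), W k c = (1/γ)*(i k c - ibar k c) - v k c := by
    intro k c
    have h := hWcoord k c
    field_simp
    linarith
  have hGcoord : ∀ (k : ℕ) (c : Fin 2),
      v k c + τ*(2*(ibar k c) - i k c) = vbar k c + τ*(G k c) := by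
    intro k c
    have h := congrArg (fun z : EuclideanSpace ℝ (Fin 2) => z c) (hGeq k)
    have h2 : (2 : ℕ) • ibar k = ibar k + ibar k := two_nsmul (ibar k)
    rw [h2] at h
    have := h
    simpa [PiLp.sub_apply, PiLp.add_apply, PiLp.smul_apply, smul_eq_mul, two_mul] using this
  have hGf : ∀ (k : ℕ) (c : Fin 2),
      G k c = (1/τ)*(v k c - vbar k c) + 2*(ibar k c) - i k c := by
    intro k c
    have h := hGcoord k c
    field_simp
    linarith
  -- coordinate versions of relaxation steps
  have hic : ∀ (k : ℕ) (c : Fin 2), i (k+1) c = i k c + lam*(ibar k c - i k c) := by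
    intro k c
    have h := congrArg (fun z : EuclideanSpace ℝ (Fin 2) => z c) (hstep3 k)
    simpa [PiLp.sub_apply, PiLp.add_apply, PiLp.smul_apply, smul_eq_mul] using h
  have hvc : ∀ (k : ℕ) (c : Fin 2), v (k+1) c = v k c + lam*(vbar k c - v k c) := by
    intro k c
    have h := congrArg (fun z : EuclideanSpace ℝ (Fin 2) => z c) (hstep4 k)
    simpa [PiLp.sub_apply, PiLp.add_apply, PiLp.smul_apply, smul_eq_mul] using h
  -- membership coordinates for Rtil
  have hRmemc : ∀ k : ℕ, (W k 0 - s 0 ∈ RC (ibar k 0)) ∧ (W k 1 - s 1 ∈ RE (ibar k 1)) := by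
    intro k
    have hm := hWmem k
    rw [hRtil] at hm
    obtain ⟨a, ha, b, hb, heq⟩ := hm
    have h0 : W k 0 = a + s 0 := by rw [heq]; rfl
    have h1 : W k 1 = b + s 1 := by rw [heq]; rfl
    constructor
    · have : W k 0 - s 0 = a := by rw [h0]; ring
      rwa [this]
    · have : W k 1 - s 1 = b := by rw [h1]; ring
      rwa [this]
  -- membership coordinates for Gtil
  have hGmemc : ∀ k : ℕ, ∃ u1 u2 : ℝ, u1 ∈ TD (vbar k 0) ∧ u2 ∈ TD (vbar k 1) ∧
      G k 0 = u1 - aR*u2 + (1/r)*(vbar k 0) ∧ G k 1 = -(aF*u1) + u2 + (1/r)*(vbar k 1) := by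
    intro k
    have hm := hGmem k
    rw [hGtil] at hm
    obtain ⟨m, hmTN, hmeq⟩ := hm
    obtain ⟨u1, hu1, u2, hu2, hmdef⟩ := hmTN
    refine ⟨u1, u2, hu1, hu2, ?_, ?_⟩
    · have h := congrArg (fun z : EuclideanSpace ℝ (Fin 2) => z 0) hmeq
      simp only [PiLp.add_apply, PiLp.smul_apply, smul_eq_mul] at h
      rw [← h, hmdef, applyEM_apply0]
      have e0 : ((WithLp.equiv 2 (Fin 2 → ℝ)).symm ![u1, u2]) 0 = u1 := rfl
      have e1 : ((WithLp.equiv 2 (Fin 2 → ℝ)).symm ![u1, u2]) 1 = u2 := rfl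
      rw [e0, e1]
    · have h := congrArg (fun z : EuclideanSpace ℝ (Fin 2) => z 1) hmeq
      simp only [PiLp.add_apply, PiLp.smul_apply, smul_eq_mul] at h
      rw [← h, hmdef, applyEM_apply1]
      have e0 : ((WithLp.equiv 2 (Fin 2 → ℝ)).symm ![u1, u2]) 0 = u1 := rfl
      have e1 : ((WithLp.equiv 2 (Fin 2 → ℝ)).symm ![u1, u2]) 1 = u2 := rfl
      rw [e0, e1]
  choose U1 U2 hU1 hU2 hGf0 hGf1 using hGmemc
  -- the Lyapunov sequence
  obtain ⟨NK, hNK⟩ : ∃ f : ℕ → ℝ, ∀ k, f k = Nf (1/γ) (1/τ) (i (k+1) 0 - i k 0)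
      (i (k+1) 1 - i k 1) (v (k+1) 0 - v k 0) (v (k+1) 1 - v k 1) :=
    ⟨_, fun k => rfl⟩
  have hNKnn : ∀ k, 0 ≤ NK k := by
    intro k
    rw [hNK k]
    exact Nf_nonneg _ _ _ _ _ _ hgipos hgiti
  have hNstep : ∀ k, NK (k+1) ≤ (1-θ)*NK k := by
    intro k
    rw [hNK (k+1), hNK k]
    -- HR hypotheses
    have HR0 : (ibar (k+1) 0 - ibar k 0)*(W (k+1) 0 - W k 0)
        ≥ (9/8)*r*(ibar (k+1) 0 - ibar k 0)^2 - ((1/r)/8)*(W (k+1) 0 - W k 0)^2 := by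
      have h := hRCsemi (hRmemc (k+1)).1 (hRmemc k).1
      have e : (W (k+1) 0 - s 0) - (W k 0 - s 0) = W (k+1) 0 - W k 0 := by ring
      rw [e] at h
      have e2 : -(1/(8*r)) = -((1/r)/8) := by
        rw [div_div, mul_comm]
      rw [e2] at h
      linarith [h]
    have HR1 : (ibar (k+1) 1 - ibar k 1)*(W (k+1) 1 - W k 1)
        ≥ (9/8)*r*(ibar (k+1) 1 - ibar k 1)^2 - ((1/r)/8)*(W (k+1) 1 - W k 1)^2 := by
      have h := hREsemi (hRmemc (k+1)).2 (hRmemc k).2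
      have e : (W (k+1) 1 - s 1) - (W k 1 - s 1) = W (k+1) 1 - W k 1 := by ring
      rw [e] at h
      have e2 : -(1/(8*r)) = -((1/r)/8) := by
        rw [div_div, mul_comm]
      rw [e2] at h
      linarith [h]
    -- HG hypothesis via Gsemi
    have HG : (vbar (k+1) 0 - vbar k 0)*(G (k+1) 0 - G k 0)
          + (vbar (k+1) 1 - vbar k 1)*(G (k+1) 1 - G k 1)
        ≥ ((1/r)/2)*((vbar (k+1) 0 - vbar k 0)^2 + (vbar (k+1) 1 - vbar k 1)^2)
          - (r/2)*((G (k+1) 0 - G k 0)^2 + (G (k+1) 1 - G k 1)^2) := by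
      have hab0 : 0 ≤ (U1 (k+1) - U1 k)*(vbar (k+1) 0 - vbar k 0) := hTD (hU1 (k+1)) (hU1 k)
      have hab1 : 0 ≤ (U2 (k+1) - U2 k)*(vbar (k+1) 1 - vbar k 1) := hTD (hU2 (k+1)) (hU2 k)
      have hg0' : r*(G (k+1) 0 - G k 0) = r*(U1 (k+1) - U1 k)
          - aR*(r*(U2 (k+1) - U2 k)) + (vbar (k+1) 0 - vbar k 0) := by
        rw [hGf0 (k+1), hGf0 k]
        field_simp
        ring
      have hg1' : r*(G (k+1) 1 - G k 1) = -(aF*(r*(U1 (k+1) - U1 k)))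
          + r*(U2 (k+1) - U2 k) + (vbar (k+1) 1 - vbar k 1) := by
        rw [hGf1 (k+1), hGf1 k]
        field_simp
        ring
      have hc0 : 0 ≤ (r*(U1 (k+1) - U1 k))*(vbar (k+1) 0 - vbar k 0) := by
        rw [mul_assoc]
        exact mul_nonneg hr.le hab0
      have hc1 : 0 ≤ (r*(U2 (k+1) - U2 k))*(vbar (k+1) 1 - vbar k 1) := by
        rw [mul_assoc]
        exact mul_nonneg hr.le hab1
      have hE := Ekey aR aF (r*(U1 (k+1) - U1 k)) (r*(U2 (k+1) - U2 k))
        (vbar (k+1) 0 - vbar k 0) (vbar (k+1) 1 - vbar k 1)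
        haR0 haR1.le haF0 haF1.le hc0 hc1
      exact Gsemi aR aF r (1/r) (U1 (k+1) - U1 k) (U2 (k+1) - U2 k)
        (vbar (k+1) 0 - vbar k 0) (vbar (k+1) 1 - vbar k 1)
        (G (k+1) 0 - G k 0) (G (k+1) 1 - G k 1)
        haR0 haR1.le haF0 haF1.le hr hrri hab0 hab1 hg0' hg1' hE
    exact master (1/γ) (1/τ) r (1/r) lam δ ε εi ε2 ε2i cx cy K θ
      hgipos htipos hr hrri hgiti hlam0 hδpos hεpos hεεi hε2pos hε2εi hcx hcy
      hCE hCXe hCYe hKδ hKx hKy hKpos hθK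
      (i (k+1) 0 - i k 0) (i (k+1) 1 - i k 1) (v (k+1) 0 - v k 0) (v (k+1) 1 - v k 1)
      (ibar (k+1) 0 - ibar k 0) (ibar (k+1) 1 - ibar k 1)
      (vbar (k+1) 0 - vbar k 0) (vbar (k+1) 1 - vbar k 1)
      (W (k+1) 0 - W k 0) (W (k+1) 1 - W k 1) (G (k+1) 0 - G k 0) (G (k+1) 1 - G k 1)
      (i (k+2) 0 - i (k+1) 0) (i (k+2) 1 - i (k+1) 1)
      (v (k+2) 0 - v (k+1) 0) (v (k+2) 1 - v (k+1) 1)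
      (by rw [hWf (k+1) 0, hWf k 0]; ring) (by rw [hWf (k+1) 1, hWf k 1]; ring)
      (by rw [hGf (k+1) 0, hGf k 0]; ring) (by rw [hGf (k+1) 1, hGf k 1]; ring)
      (by rw [hic (k+1) 0, hic k 0]; ring) (by rw [hic (k+1) 1, hic k 1]; ring)
      (by rw [hvc (k+1) 0, hvc k 0]; ring) (by rw [hvc (k+1) 1, hvc k 1]; ring)
      HR0 HR1 HG
  have hκ0 : 0 ≤ 1-θ := by linarith
  have hκ1 : 1-θ < 1 := by linarith
  have hgeo : ∀ k, NK k ≤ (1-θ)^k * NK 0 := by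
    intro k
    induction k with
    | zero => simp
    | succ n ih =>
      calc NK (n+1) ≤ (1-θ)*NK n := hNstep n
      _ ≤ (1-θ)*((1-θ)^n * NK 0) := mul_le_mul_of_nonneg_left ih hκ0
      _ = (1-θ)^(n+1) * NK 0 := by ring
  -- lower bound of the M-norm
  obtain ⟨ν, hνpos, hν⟩ := Nf_lower (1/γ) (1/τ) hgipos htipos hgiti'
  have hν' : ∀ a0 a1 b0 b1 : ℝ, ν*(a0^2+a1^2+b0^2+b1^2) ≤ Nf (1/γ) (1/τ) a0 a1 b0 b1 := by
    intro a0 a1 b0 b1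
    rw [Nf]
    exact hν a0 a1 b0 b1
  have hq0 : 0 ≤ Real.sqrt (1-θ) := Real.sqrt_nonneg _
  have hqlt : Real.sqrt (1-θ) < 1 := by
    nlinarith [Real.sq_sqrt hκ0, Real.sqrt_nonneg (1-θ)]
  -- distance bounds
  have hSbound : ∀ k : ℕ,
      (i k 0 - i (k+1) 0)^2 + (i k 1 - i (k+1) 1)^2 ≤ (NK 0/ν)*(1-θ)^k ∧
      (v k 0 - v (k+1) 0)^2 + (v k 1 - v (k+1) 1)^2 ≤ (NK 0/ν)*(1-θ)^k := by
    intro k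
    have h1 := hν' (i (k+1) 0 - i k 0) (i (k+1) 1 - i k 1) (v (k+1) 0 - v k 0)
      (v (k+1) 1 - v k 1)
    rw [← hNK k] at h1
    have h2 := hgeo k
    have hv4 : 0 ≤ (v (k+1) 0 - v k 0)^2 + (v (k+1) 1 - v k 1)^2 := by positivity
    have hi4 : 0 ≤ (i (k+1) 0 - i k 0)^2 + (i (k+1) 1 - i k 1)^2 := by positivity
    constructor
    · rw [div_mul_eq_mul_div, le_div_iff₀ hνpos]
      nlinarith [h1, h2, mul_nonneg hνpos.le hv4]
    · rw [div_mul_eq_mul_div, le_div_iff₀ hνpos]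
      nlinarith [h1, h2, mul_nonneg hνpos.le hi4]
  have hde : ∀ (f : ℕ → EuclideanSpace ℝ (Fin 2)) (k : ℕ),
      dist (f k) (f (k+1)) = Real.sqrt ((f k 0 - f (k+1) 0)^2 + (f k 1 - f (k+1) 1)^2) := by
    intro f k
    rw [EuclideanSpace.dist_eq]
    congr 1
    rw [Fin.sum_univ_two]
    simp [Real.dist_eq, sq_abs]
  have hgeodist : ∀ (f : ℕ → EuclideanSpace ℝ (Fin 2)),
      (∀ k : ℕ, (f k 0 - f (k+1) 0)^2 + (f k 1 - f (k+1) 1)^2 ≤ (NK 0/ν)*(1-θ)^k) →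
      ∀ k : ℕ, dist (f k) (f (k+1)) ≤ Real.sqrt (NK 0/ν) * (Real.sqrt (1-θ))^k := by
    intro f hf k
    calc dist (f k) (f (k+1))
        = Real.sqrt ((f k 0 - f (k+1) 0)^2 + (f k 1 - f (k+1) 1)^2) := hde f k
      _ ≤ Real.sqrt ((NK 0/ν)*(1-θ)^k) := Real.sqrt_le_sqrt (hf k)
      _ = Real.sqrt (NK 0/ν) * Real.sqrt ((1-θ)^k) := Real.sqrt_mul (div_nonneg (hNKnn 0) hνpos.le) _
      _ = Real.sqrt (NK 0/ν) * (Real.sqrt (1-θ))^k := by rw [sqrt_pow_nat _ hκ0]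
  have hCi : CauchySeq i :=
    cauchySeq_of_le_geometric _ _ hqlt (hgeodist i (fun k => (hSbound k).1))
  have hCv : CauchySeq v :=
    cauchySeq_of_le_geometric _ _ hqlt (hgeodist v (fun k => (hSbound k).2))
  obtain ⟨istar, hilim⟩ := cauchySeq_tendsto_of_complete hCi
  obtain ⟨vstar, hvlim⟩ := cauchySeq_tendsto_of_complete hCv
  -- coordinatewise limits
  have hcoordT : ∀ (f : ℕ → EuclideanSpace ℝ (Fin 2)) (L : EuclideanSpace ℝ (Fin 2))
      (c : Fin 2), Filter.Tendsto f Filter.atTop (nhds L) →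
      Filter.Tendsto (fun k => f k c) Filter.atTop (nhds (L c)) := by
    intro f L c h
    have hcont : Continuous (fun z : EuclideanSpace ℝ (Fin 2) => z c) :=
      (EuclideanSpace.proj (𝕜 := ℝ) c).continuous
    exact (hcont.tendsto L).comp h
  have hshift : ∀ (g : ℕ → ℝ) (L : ℝ), Filter.Tendsto g Filter.atTop (nhds L) →
      Filter.Tendsto (fun k => g (k+1)) Filter.atTop (nhds L) := by
    intro g L h
    exact h.comp (Filter.tendsto_add_atTop_nat 1)
  have hiT : ∀ c : Fin 2, Filter.Tendsto (fun k => i k c) Filter.atTop (nhds (istar c)) :=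
    fun c => hcoordT i istar c hilim
  have hvT : ∀ c : Fin 2, Filter.Tendsto (fun k => v k c) Filter.atTop (nhds (vstar c)) :=
    fun c => hcoordT v vstar c hvlim
  have hibT : ∀ c : Fin 2, Filter.Tendsto (fun k => ibar k c) Filter.atTop (nhds (istar c)) := by
    intro c
    have hfor : ∀ k : ℕ, ibar k c = i k c + (1/lam)*(i (k+1) c - i k c) := by
      intro k
      have h := hic k c
      field_simp
      linarith
    have base : Filter.Tendsto (fun k => i k c + (1/lam)*(i (k+1) c - i k c))
        Filter.atTop (nhds (istar c + (1/lam)*(istar c - istar c))) :=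
      (hiT c).add (((hshift _ _ (hiT c)).sub (hiT c)).const_mul _)
    have : istar c + (1/lam)*(istar c - istar c) = istar c := by ring
    rw [this] at base
    exact base.congr (fun k => (hfor k).symm)
  have hvbT : ∀ c : Fin 2, Filter.Tendsto (fun k => vbar k c) Filter.atTop (nhds (vstar c)) := by
    intro c
    have hfor : ∀ k : ℕ, vbar k c = v k c + (1/lam)*(v (k+1) c - v k c) := by
      intro k
      have h := hvc k c
      field_simp
      linarith
    have base : Filter.Tendsto (fun k => v k c + (1/lam)*(v (k+1) c - v k c))
        Filter.atTop (nhds (vstar c + (1/lam)*(vstar c - vstar c))) :=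
      (hvT c).add (((hshift _ _ (hvT c)).sub (hvT c)).const_mul _)
    have : vstar c + (1/lam)*(vstar c - vstar c) = vstar c := by ring
    rw [this] at base
    exact base.congr (fun k => (hfor k).symm)
  have hWT : ∀ c : Fin 2, Filter.Tendsto (fun k => W k c) Filter.atTop (nhds (-(vstar c))) := by
    intro c
    have base : Filter.Tendsto (fun k => (1/γ)*(i k c - ibar k c) - v k c)
        Filter.atTop (nhds ((1/γ)*(istar c - istar c) - vstar c)) :=
      (((hiT c).sub (hibT c)).const_mul _).sub (hvT c)
    have : (1/γ)*(istar c - istar c) - vstar c = -(vstar c) := by ring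
    rw [this] at base
    exact base.congr (fun k => (hWf k c).symm)
  have hGT : ∀ c : Fin 2, Filter.Tendsto (fun k => G k c) Filter.atTop (nhds (istar c)) := by
    intro c
    have base : Filter.Tendsto (fun k => (1/τ)*(v k c - vbar k c) + 2*(ibar k c) - i k c)
        Filter.atTop (nhds ((1/τ)*(vstar c - vstar c) + 2*(istar c) - istar c)) :=
      ((((hvT c).sub (hvbT c)).const_mul _).add ((hibT c).const_mul _)).sub (hiT c)
    have : (1/τ)*(vstar c - vstar c) + 2*(istar c) - istar c = istar c := by ring
    rw [this] at base
    exact base.congr (fun k => (hGf k c).symm)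
  -- closed graph limits for Rtil
  have haRCs : -(vstar 0) - s 0 ∈ RC (istar 0) := by
    have hT : Filter.Tendsto (fun k => ((ibar k 0 : ℝ), W k 0 - s 0)) Filter.atTop
        (nhds (istar 0, -(vstar 0) - s 0)) :=
      (hibT 0).prodMk_nhds ((hWT 0).sub tendsto_const_nhds)
    exact hRCosc.mem_of_tendsto hT (Filter.Eventually.of_forall (fun k => (hRmemc k).1))
  have haREs : -(vstar 1) - s 1 ∈ RE (istar 1) := by
    have hT : Filter.Tendsto (fun k => ((ibar k 1 : ℝ), W k 1 - s 1)) Filter.atTop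
        (nhds (istar 1, -(vstar 1) - s 1)) :=
      (hibT 1).prodMk_nhds ((hWT 1).sub tendsto_const_nhds)
    exact hREosc.mem_of_tendsto hT (Filter.Eventually.of_forall (fun k => (hRmemc k).2))
  -- closed graph limits for TD
  have hd : (0:ℝ) < 1 - aR*aF := by nlinarith
  obtain ⟨U1s, hU1sdef⟩ : ∃ a : ℝ,
      a = ((istar 0 - (1/r)*vstar 0) + aR*(istar 1 - (1/r)*vstar 1))/(1-aR*aF) := ⟨_, rfl⟩
  obtain ⟨U2s, hU2sdef⟩ : ∃ a : ℝ,
      a = (aF*(istar 0 - (1/r)*vstar 0) + (istar 1 - (1/r)*vstar 1))/(1-aR*aF) := ⟨_, rfl⟩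
  have hU1f : ∀ k : ℕ,
      U1 k = ((G k 0 - (1/r)*vbar k 0) + aR*(G k 1 - (1/r)*vbar k 1))/(1-aR*aF) := by
    intro k
    have e0 : G k 0 - (1/r)*vbar k 0 = U1 k - aR*U2 k := by rw [hGf0 k]; ring
    have e1 : G k 1 - (1/r)*vbar k 1 = -(aF*U1 k) + U2 k := by rw [hGf1 k]; ring
    rw [e0, e1]
    field_simp
    ring
  have hU2f : ∀ k : ℕ,
      U2 k = (aF*(G k 0 - (1/r)*vbar k 0) + (G k 1 - (1/r)*vbar k 1))/(1-aR*aF) := by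
    intro k
    have e0 : G k 0 - (1/r)*vbar k 0 = U1 k - aR*U2 k := by rw [hGf0 k]; ring
    have e1 : G k 1 - (1/r)*vbar k 1 = -(aF*U1 k) + U2 k := by rw [hGf1 k]; ring
    rw [e0, e1]
    rw [eq_div_iff hd.ne']
    ring
  have hU1T : Filter.Tendsto U1 Filter.atTop (nhds U1s) := by
    have base : Filter.Tendsto
        (fun k => ((G k 0 - (1/r)*vbar k 0) + aR*(G k 1 - (1/r)*vbar k 1))/(1-aR*aF))
        Filter.atTop (nhds (((istar 0 - (1/r)*vstar 0) + aR*(istar 1 - (1/r)*vstar 1))/(1-aR*aF))) :=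
      (((hGT 0).sub ((hvbT 0).const_mul _)).add
        (((hGT 1).sub ((hvbT 1).const_mul _)).const_mul _)).div_const _
    rw [← hU1sdef] at base
    exact base.congr (fun k => (hU1f k).symm)
  have hU2T : Filter.Tendsto U2 Filter.atTop (nhds U2s) := by
    have base : Filter.Tendsto
        (fun k => (aF*(G k 0 - (1/r)*vbar k 0) + (G k 1 - (1/r)*vbar k 1))/(1-aR*aF))
        Filter.atTop (nhds ((aF*(istar 0 - (1/r)*vstar 0) + (istar 1 - (1/r)*vstar 1))/(1-aR*aF))) :=
      ((((hGT 0).sub ((hvbT 0).const_mul _)).const_mul _).add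
        ((hGT 1).sub ((hvbT 1).const_mul _))).div_const _
    rw [← hU2sdef] at base
    exact base.congr (fun k => (hU2f k).symm)
  have hU1mem : U1s ∈ TD (vstar 0) := by
    have hT : Filter.Tendsto (fun k => ((vbar k 0 : ℝ), U1 k)) Filter.atTop
        (nhds (vstar 0, U1s)) := (hvbT 0).prodMk_nhds hU1T
    exact hTDosc.mem_of_tendsto hT (Filter.Eventually.of_forall (fun k => hU1 k))
  have hU2mem : U2s ∈ TD (vstar 1) := by
    have hT : Filter.Tendsto (fun k => ((vbar k 1 : ℝ), U2 k)) Filter.atTop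
        (nhds (vstar 1, U2s)) := (hvbT 1).prodMk_nhds hU2T
    exact hTDosc.mem_of_tendsto hT (Filter.Eventually.of_forall (fun k => hU2 k))
  -- conclusion
  refine ⟨istar, vstar, hilim.prodMk_nhds hvlim, ?_, ?_⟩
  · refine ⟨(WithLp.equiv 2 (Fin 2 → ℝ)).symm
        ![(-(vstar 0) - s 0) + s 0, (-(vstar 1) - s 1) + s 1], ?_, ?_⟩
    · rw [hRtil]
      exact ⟨_, haRCs, _, haREs, rfl⟩
    · ext c
      rw [PiLp.add_apply, PiLp.zero_apply]
      fin_cases c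
      · show (WithLp.equiv 2 (Fin 2 → ℝ)).symm
            ![(-(vstar 0) - s 0) + s 0, (-(vstar 1) - s 1) + s 1] 0 + vstar 0 = 0
        rw [esymm_apply0]
        ring
      · show (WithLp.equiv 2 (Fin 2 → ℝ)).symm
            ![(-(vstar 0) - s 0) + s 0, (-(vstar 1) - s 1) + s 1] 1 + vstar 1 = 0
        rw [esymm_apply1]
        ring
  · rw [hGtil]
    refine ⟨applyEM aR aF ((WithLp.equiv 2 (Fin 2 → ℝ)).symm ![U1s, U2s]),
      ⟨U1s, hU1mem, U2s, hU2mem, rfl⟩, ?_⟩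
    show applyEM aR aF ((WithLp.equiv 2 (Fin 2 → ℝ)).symm ![U1s, U2s])
        + (1/r) • vstar = istar
    ext c
    rw [PiLp.add_apply, PiLp.smul_apply, smul_eq_mul]
    fin_cases c
    · show applyEM aR aF ((WithLp.equiv 2 (Fin 2 → ℝ)).symm ![U1s, U2s]) 0
          + (1/r) * vstar 0 = istar 0
      rw [applyEM_apply0, esymm_apply0, esymm_apply1, hU1sdef, hU2sdef]
      field_simp
      ring
    · show applyEM aR aF ((WithLp.equiv 2 (Fin 2 → ℝ)).symm ![U1s, U2s]) 1
          + (1/r) * vstar 1 = istar 1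
      rw [applyEM_apply1, esymm_apply0, esymm_apply1, hU1sdef, hU2sdef]
      linear_combination (istar 1 - (1/r)*vstar 1) * (mul_inv_cancel₀ hd.ne')
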